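/- In the aggregation tree defined on the LDB virtual nodes (middle node's parent is its left node; left node's parent is its predecessor on the cycle; right node's parent is its middle node), every virtual node other than the global minimum has a well-defined parent whose label is strictly smaller (for left nodes, the predecessor) or related by the owner relation, and following parent pointers from any virtual node reaches the root: the structure is acyclic, i.e., a tree on the $3n$ virtual nodes. -/
import Mathlib


/-- The aggregation tree on the virtual nodes of the Linearized de Bruijn network is a
tree: each real node `v` (with hash label `m v ∈ (0,1)`) emulates a left, middle and
right virtual node with labels `m v / 2`, `m v`, `(m v + 1)/2` respectively (all virtual
labels pairwise distinct).  The parent of a middle node is its left node, the parent of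
a right node is its middle node, and the parent of a left node is its predecessor on the
label-sorted cycle; the root is the virtual node of minimum label and is its own parent.
Then every non-root virtual node has a parent of strictly smaller label, and following
parent pointers from any virtual node reaches the root — i.e. the structure is acyclic,
a tree on the `3n` virtual nodes. -/
theorem ldb_aggregation_is_tree (n : ℕ) (hn : 0 < n)
    (m : Fin n → ℝ) (hm : ∀ v, 0 < m v ∧ m v < 1)
    (lab : Fin n × Fin 3 → ℝ)
    (hlab0 : ∀ v, lab (v, 0) = m v / 2)
    (hlab1 : ∀ v, lab (v, 1) = m v)
    (hlab2 : ∀ v, lab (v, 2) = (m v + 1) / 2)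
    (hinj : Function.Injective lab)
    (parent : Fin n × Fin 3 → Fin n × Fin 3)
    (root : Fin n × Fin 3)
    (hroot_min : ∀ w, lab root ≤ lab w)
    (hroot_fix : parent root = root)
    (hpar_mid : ∀ v, parent (v, 1) = (v, 0))
    (hpar_right : ∀ v, parent (v, 2) = (v, 1))
    (hpar_left : ∀ v, (v, (0 : Fin 3)) ≠ root →
      lab (parent (v, 0)) < lab (v, 0) ∧
      ∀ w, lab w < lab (v, 0) → lab w ≤ lab (parent (v, 0))) :
    (∀ x, x ≠ root → lab (parent x) < lab x) ∧
    (∀ x, ∃ j : ℕ, parent^[j] x = root) := by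
  have h1 : ∀ x, x ≠ root → lab (parent x) < lab x := by
    rintro ⟨v, i⟩ hx
    fin_cases i
    · exact (hpar_left v hx).1
    · show lab (parent (v, 1)) < lab (v, 1)
      rw [hpar_mid, hlab0 v, hlab1 v]; linarith [(hm v).1]
    · show lab (parent (v, 2)) < lab (v, 2)
      rw [hpar_right, hlab1 v, hlab2 v]; linarith [(hm v).2]
  refine ⟨h1, ?_⟩
  have key : ∀ k : ℕ, ∀ x : Fin n × Fin 3,
      (Finset.univ.filter (fun y => lab y < lab x)).card ≤ k →
      ∃ j, parent^[j] x = root := by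
    intro k
    induction k with
    | zero =>
      intro x hx
      refine ⟨0, ?_⟩
      simp only [Function.iterate_zero, id]
      by_contra hne
      have hlt : lab root < lab x :=
        lt_of_le_of_ne (hroot_min x) (fun h => hne (hinj h).symm)
      have : root ∈ Finset.univ.filter (fun y => lab y < lab x) := by
        simp [hlt]
      have := Finset.card_pos.mpr ⟨root, this⟩
      omega
    | succ k ih =>
      intro x hx
      by_cases hx0 : x = root
      · exact ⟨0, by simp [hx0]⟩
      · have hp := h1 x hx0
        have hmem : parent x ∈ Finset.univ.filter (fun y => lab y < lab x) := by
          simp [hp]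
        have hsub : Finset.univ.filter (fun y => lab y < lab (parent x)) ⊆
            (Finset.univ.filter (fun y => lab y < lab x)).erase (parent x) := by
          intro y hy
          simp only [Finset.mem_filter, Finset.mem_univ, true_and] at hy
          refine Finset.mem_erase.mpr ⟨?_, ?_⟩
          · intro h; rw [h] at hy; exact lt_irrefl _ hy
          · simp only [Finset.mem_filter, Finset.mem_univ, true_and]
            exact hy.trans hp
        have hcard : (Finset.univ.filter (fun y => lab y < lab (parent x))).card ≤ k := by
          have := Finset.card_le_card hsub
          have herase := Finset.card_erase_of_mem hmem
          omega
        obtain ⟨j, hj⟩ := ih (parent x) hcard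
        exact ⟨j + 1, by rw [Function.iterate_succ_apply, hj]⟩
  intro x
  exact key _ x le_rfl
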